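/- Let Γ be a finite connected h-expander graph (h > 0), let p, q be vertices of Γ, let t ≥ 0 be an integer, and let S be a set of vertices of Γ such that S is disjoint from B_{Γ,p}(t) and from B_{Γ,q}(t), and such that |S| ≤ (h/2) · min( (1+h)^t , |Γ|/2 ). Then p and q lie in the same connected component of the graph Γ \ S obtained by deleting the vertices of S, and the distance between p and q in Γ \ S satisfies d_{Γ\S}(p,q) ≤ 2·log|Γ| / log(1+h/2) + 2. -/

import Mathlib

/-- The outer vertex boundary of a set `S` of vertices: the vertices outside `S` adjacent
to some vertex of `S`. -/
def outerBoundary {V : Type*} (G : SimpleGraph V) (S : Set V) : Set V :=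
  {v | v ∉ S ∧ ∃ u ∈ S, G.Adj u v}

/-- A finite graph is an `h`-expander if every set `S` of at most half the vertices has
at least `h·|S|` vertices outside `S` adjacent to `S`. -/
def IsExpander {V : Type*} [Fintype V] (G : SimpleGraph V) (h : ℝ) : Prop :=
  ∀ S : Set V, (S.ncard : ℝ) ≤ (Fintype.card V : ℝ) / 2 →
    h * (S.ncard : ℝ) ≤ ((outerBoundary G S).ncard : ℝ)

/-- The ball of radius `r` about `p` in the graph `G`. -/
def graphBall {V : Type*} (G : SimpleGraph V) (p : V) (r : ℕ) : Set V :=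
  {v | G.dist p v ≤ r}


/-!
Grow balls about `p` and `q` in `Γ \ S`. Up to radius `t` such a ball does not see `S`, so the
expansion of `Γ` makes it grow by the factor `1 + h` until it covers half of `Γ`; in particular
at radius `t` it already has at least `min((1+h)^t, |Γ|/2) ≥ 2|S|/h` vertices. From then on the
vertices of `S` can eat at most `|S| ≤ (h/2)·|ball|` of the boundary, so the ball keeps growing
by the factor `1 + h/2`. After `R ≈ log|Γ| / log(1 + h/2)` steps both balls hold more than half
of the vertices, hence meet, and `p`, `q` are joined in `Γ \ S` by a path of length at most `2R`.
-/

section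

open SimpleGraph Set

variable {V : Type*}

theorem Monotone.lt_or_pow_le_of_mul_le_succ {f : ℕ → ℝ} (hf : Monotone f) {N c : ℝ}
    (hc : 0 ≤ c) (h0 : 1 ≤ f 0) {T : ℕ}
    (hstep : ∀ r < T, f r ≤ N → c * f r ≤ f (r + 1)) :
    ∀ r ≤ T, N < f r ∨ c ^ r ≤ f r := by
  intro r
  induction r with
  | zero => simp [h0]
  | succ r ih =>
    intro hr
    rcases ih (by omega) with hbig | hpow
    · exact .inl (hbig.trans_le (hf r.le_succ))
    by_cases hsmall : f r ≤ N
    · right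
      calc c ^ (r + 1) = c * c ^ r := pow_succ' c r
        _ ≤ c * f r := mul_le_mul_of_nonneg_left hpow hc
        _ ≤ f (r + 1) := hstep r (by omega) hsmall
    · exact .inl ((not_le.mp hsmall).trans_le (hf r.le_succ))

theorem Real.exists_lt_pow_le_log_div_log_add_one {c x : ℝ} (hc : 1 < c) (hx : 1 ≤ x) :
    ∃ R : ℕ, x < c ^ R ∧ (R : ℝ) ≤ Real.log x / Real.log c + 1 := by
  have hlogc : 0 < Real.log c := Real.log_pos hc
  have hq : 0 ≤ Real.log x / Real.log c := div_nonneg (Real.log_nonneg hx) hlogc.le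
  refine ⟨⌊Real.log x / Real.log c⌋₊ + 1, Real.lt_pow_of_log_lt (by linarith) ?_, ?_⟩
  · rw [← div_lt_iff₀ hlogc]
    exact_mod_cast Nat.lt_floor_add_one _
  · push_cast
    linarith [Nat.floor_le hq]

theorem notMem_of_disjoint_graphBall {G : SimpleGraph V} {S : Set V} {p : V} {t : ℕ}
    (hSp : Disjoint S (graphBall G p t)) : p ∉ S :=
  fun hpS => disjoint_left.mp hSp hpS (by simp [graphBall])

theorem graphBall_mono {G : SimpleGraph V} {p : V} : Monotone (graphBall G p) :=
  fun _ _ hrr' _ hv => (show G.dist p _ ≤ _ from hv).trans (by exact_mod_cast hrr')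

/-- The ball of radius `r` about `x` in the graph `G \ S`, as a set of vertices of `G`. -/
def ballAvoiding (G : SimpleGraph V) (S : Set V) (x : {v | v ∉ S}) (r : ℕ) : Set V :=
  {v | ∃ (hv : v ∉ S) (w : (G.induce {v | v ∉ S}).Walk x ⟨v, hv⟩), w.length ≤ r}

section ballAvoiding

variable {G : SimpleGraph V} {S : Set V} {x : {v | v ∉ S}}

theorem mem_ballAvoiding_self (r : ℕ) : x.1 ∈ ballAvoiding G S x r :=
  ⟨x.2, .nil, Nat.zero_le r⟩

theorem ballAvoiding_mono : Monotone (ballAvoiding G S x) :=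
  fun _ _ hrr' _ ⟨hv, w, hw⟩ => ⟨hv, w, hw.trans hrr'⟩

theorem outerBoundary_ballAvoiding_diff_subset (r : ℕ) :
    outerBoundary G (ballAvoiding G S x r) \ S ⊆ ballAvoiding G S x (r + 1) := by
  rintro v ⟨⟨-, u, ⟨hu, w, hw⟩, huv⟩, hv⟩
  refine ⟨hv, w.concat (show (G.induce {v | v ∉ S}).Adj ⟨u, hu⟩ ⟨v, hv⟩ from huv), ?_⟩
  rw [Walk.length_concat]
  omega

theorem outerBoundary_ballAvoiding_subset_graphBall (r : ℕ) :
    outerBoundary G (ballAvoiding G S x r) ⊆ graphBall G x (r + 1) := by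
  rintro v ⟨-, u, ⟨hu, w, hw⟩, huv⟩
  let w' : G.Walk x u := w.map (Embedding.induce {v | v ∉ S}).toHom
  have hw' : w'.length ≤ r := (Walk.length_map _ w).trans_le hw
  refine (dist_le (w'.concat huv)).trans ?_
  rw [Walk.length_concat]
  omega

theorem reachable_and_dist_le_of_mem_ballAvoiding {y : {v | v ∉ S}} {z : V} {r r' : ℕ}
    (hx : z ∈ ballAvoiding G S x r) (hy : z ∈ ballAvoiding G S y r') :
    (G.induce {v | v ∉ S}).Reachable x y ∧ (G.induce {v | v ∉ S}).dist x y ≤ r + r' := by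
  obtain ⟨_, w, hw⟩ := hx
  obtain ⟨_, w', hw'⟩ := hy
  refine ⟨⟨w.append w'.reverse⟩, (dist_le (w.append w'.reverse)).trans ?_⟩
  rw [Walk.length_append, Walk.length_reverse]
  omega

variable [Finite V]

theorem ncard_add_ncard_outerBoundary_diff_le (r : ℕ) :
    (ballAvoiding G S x r).ncard + (outerBoundary G (ballAvoiding G S x r) \ S).ncard ≤
      (ballAvoiding G S x (r + 1)).ncard := by
  have hdisj : Disjoint (ballAvoiding G S x r) (outerBoundary G (ballAvoiding G S x r) \ S) :=
    disjoint_left.mpr fun _ hv hv' => hv'.1.1 hv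
  rw [← ncard_union_eq hdisj]
  exact ncard_le_ncard (union_subset (ballAvoiding_mono r.le_succ)
    (outerBoundary_ballAvoiding_diff_subset r))

theorem one_le_ncard_ballAvoiding (r : ℕ) : 1 ≤ (ballAvoiding G S x r).ncard :=
  (ncard_pos).mpr ⟨_, mem_ballAvoiding_self r⟩

end ballAvoiding

namespace IsExpander

variable [Fintype V] {G : SimpleGraph V} {h : ℝ} {S : Set V} {x : {v | v ∉ S}}

theorem mul_ncard_ballAvoiding_le (hexp : IsExpander G h) {r : ℕ}
    (hr : ((ballAvoiding G S x r).ncard : ℝ) ≤ (Fintype.card V : ℝ) / 2) :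
    (1 + h) * (ballAvoiding G S x r).ncard ≤ (ballAvoiding G S x (r + 1)).ncard +
      (outerBoundary G (ballAvoiding G S x r) ∩ S).ncard := by
  have hsplit : ((outerBoundary G (ballAvoiding G S x r) ∩ S).ncard : ℝ) +
      (outerBoundary G (ballAvoiding G S x r) \ S).ncard =
        (outerBoundary G (ballAvoiding G S x r)).ncard := by
    exact_mod_cast ncard_inter_add_ncard_sdiff_eq_ncard _ S
  have hgrow : ((ballAvoiding G S x r).ncard : ℝ) +
      (outerBoundary G (ballAvoiding G S x r) \ S).ncard ≤
        (ballAvoiding G S x (r + 1)).ncard := by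
    exact_mod_cast ncard_add_ncard_outerBoundary_diff_le r
  linarith [hexp _ hr]

theorem lt_ncard_ballAvoiding_or_pow_le (hexp : IsExpander G h) (hh : 0 < h) {t : ℕ}
    (hSx : Disjoint S (graphBall G x t))
    (hS : (S.ncard : ℝ) ≤ (h / 2) * min ((1 + h) ^ t) ((Fintype.card V : ℝ) / 2)) (r : ℕ) :
    (Fintype.card V : ℝ) / 2 < (ballAvoiding G S x r).ncard ∨
      (1 + h / 2) ^ r ≤ (ballAvoiding G S x r).ncard := by
  set f : ℕ → ℝ := fun r => (ballAvoiding G S x r).ncard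
  have hf : Monotone f := fun r r' hrr' =>
    Nat.cast_le.mpr (ncard_le_ncard (ballAvoiding_mono hrr'))
  have hf0 : 1 ≤ f 0 := Nat.one_le_cast.mpr (one_le_ncard_ballAvoiding 0)
  have hfast : ∀ s < t, f s ≤ (Fintype.card V : ℝ) / 2 → (1 + h) * f s ≤ f (s + 1) := by
    intro s hst hs
    have hfar : outerBoundary G (ballAvoiding G S x s) ∩ S = ∅ :=
      eq_empty_of_forall_notMem fun v ⟨hv, hvS⟩ => disjoint_left.mp hSx hvS <|
        graphBall_mono (by omega) (outerBoundary_ballAvoiding_subset_graphBall s hv)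
    simpa [hfar] using hexp.mul_ncard_ballAvoiding_le hs
  -- at radius `t` the ball is already large enough to absorb the loss caused by `S`
  have hSt : (S.ncard : ℝ) ≤ (h / 2) * f t := by
    rcases hf.lt_or_pow_le_of_mul_le_succ (by linarith) hf0 hfast t le_rfl with hbig | hpow
    · nlinarith [min_le_right ((1 + h) ^ t) ((Fintype.card V : ℝ) / 2)]
    · nlinarith [min_le_left ((1 + h) ^ t) ((Fintype.card V : ℝ) / 2)]
  refine hf.lt_or_pow_le_of_mul_le_succ (by linarith) hf0 (fun s _ hs => ?_) r le_rfl
  have hfs : 0 ≤ f s := by positivity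
  rcases lt_or_ge s t with hst | hts
  · nlinarith [hfast s hst hs]
  · have hloss : ((outerBoundary G (ballAvoiding G S x s) ∩ S).ncard : ℝ) ≤ S.ncard := by
      exact_mod_cast ncard_inter_le_ncard_right _ S
    nlinarith [hexp.mul_ncard_ballAvoiding_le hs, hf hts]

end IsExpander

end

theorem expander_remove_small_set_general {V : Type*} [Fintype V] (G : SimpleGraph V)
    (h : ℝ) (hh : 0 < h) (hexp : IsExpander G h)
    (p q : V) (t : ℕ) (S : Set V)
    (hSp : Disjoint S (graphBall G p t))
    (hSq : Disjoint S (graphBall G q t))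
    (hS : (S.ncard : ℝ) ≤ (h / 2) * min ((1 + h) ^ t) ((Fintype.card V : ℝ) / 2)) :
    ∃ (hp : p ∈ {v | v ∉ S}) (hq : q ∈ {v | v ∉ S}),
      (G.induce {v | v ∉ S}).Reachable ⟨p, hp⟩ ⟨q, hq⟩ ∧
      (((G.induce {v | v ∉ S}).dist ⟨p, hp⟩ ⟨q, hq⟩ : ℕ) : ℝ) ≤
        2 * Real.log (Fintype.card V) / Real.log (1 + h / 2) + 2 := by
  have hp : p ∉ S := notMem_of_disjoint_graphBall hSp
  have hq : q ∉ S := notMem_of_disjoint_graphBall hSq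
  have hn : (1 : ℝ) ≤ Fintype.card V := by exact_mod_cast Fintype.card_pos_iff.mpr ⟨p⟩
  obtain ⟨R, hnR, hR⟩ :=
    Real.exists_lt_pow_le_log_div_log_add_one (c := 1 + h / 2) (by linarith) hn
  have hcard (A : Set V) : (A.ncard : ℝ) ≤ Fintype.card V := by
    exact_mod_cast Nat.card_eq_fintype_card (α := V) ▸ A.ncard_le_card
  have hhalf (x : {v | v ∉ S}) (hx : Disjoint S (graphBall G x t)) :
      (Fintype.card V : ℝ) / 2 < (ballAvoiding G S x R).ncard :=
    (hexp.lt_ncard_ballAvoiding_or_pow_le hh hx hS R).resolve_right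
      fun hpow => (hnR.trans_le (hpow.trans (hcard _))).false
  have hmeet : Nat.card V <
      (ballAvoiding G S ⟨p, hp⟩ R).ncard + (ballAvoiding G S ⟨q, hq⟩ R).ncard := by
    rw [Nat.card_eq_fintype_card, ← Nat.cast_lt (α := ℝ), Nat.cast_add]
    linarith [hhalf ⟨p, hp⟩ hSp, hhalf ⟨q, hq⟩ hSq]
  obtain ⟨z, hzp, hzq⟩ := Set.nonempty_inter_of_lt_ncard_add_ncard hmeet
  obtain ⟨hreach, hdist⟩ := reachable_and_dist_le_of_mem_ballAvoiding hzp hzq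
  refine ⟨hp, hq, hreach, ?_⟩
  calc (((G.induce {v | v ∉ S}).dist ⟨p, hp⟩ ⟨q, hq⟩ : ℕ) : ℝ) ≤ R + R := by
        exact_mod_cast hdist
    _ ≤ _ := by rw [mul_div_assoc]; linarith

/-- **Removing a small set far from `p` and `q` keeps them close.** In a finite connected
`h`-expander, if `S` is a set of vertices disjoint from the balls of radius `t` about `p`
and about `q`, with `|S| ≤ (h/2)·min((1+h)^t, |Γ|/2)`, then `p` and `q` lie in the same
connected component of `Γ \ S`, at distance at most `2·log|Γ|/log(1+h/2) + 2` there. -/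
theorem expander_remove_small_set {V : Type*} [Fintype V] (G : SimpleGraph V)
    (hconn : G.Connected) (h : ℝ) (hh : 0 < h) (hexp : IsExpander G h)
    (p q : V) (t : ℕ) (S : Set V)
    (hSp : Disjoint S (graphBall G p t))
    (hSq : Disjoint S (graphBall G q t))
    (hS : (S.ncard : ℝ) ≤ (h / 2) * min ((1 + h) ^ t) ((Fintype.card V : ℝ) / 2)) :
    ∃ (hp : p ∈ {v | v ∉ S}) (hq : q ∈ {v | v ∉ S}),
      (G.induce {v | v ∉ S}).Reachable ⟨p, hp⟩ ⟨q, hq⟩ ∧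
      (((G.induce {v | v ∉ S}).dist ⟨p, hp⟩ ⟨q, hq⟩ : ℕ) : ℝ) ≤
        2 * Real.log (Fintype.card V) / Real.log (1 + h / 2) + 2 :=
  expander_remove_small_set_general G h hh hexp p q t S hSp hSq hS
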